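/- For all nonnegative integers a_0, a_1, …, a_n, the ℚ(q)-algebra endomorphism π of the Laurent polynomial ring ℚ(q)[x_0^{±1}, …, x_n^{±1}] determined by x_0 ↦ x_1, x_1 ↦ x_2, …, x_{n−1} ↦ x_n, x_n ↦ x_0/q satisfies π( D_n(x, (a_0, a_1, …, a_n), q) ) = D_n(x, (a_n, a_0, a_1, …, a_{n−1}), q). -/

import Mathlib

/- π (Dₙ(x,(a₀,…,aₙ),q)) = Dₙ(x,(aₙ,a₀,…,a_{n-1}),q). -/
/- Zeilberger–Bressoud q-Dyson Theorem.
Work over `K = ℚ(q)`.  Laurent polynomials in the variables `x₀, x₁, …, xₙ` are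
modelled as the add-monoid algebra of `K` over exponent vectors `ℕ →₀ ℤ`
(only the variables `x₀, …, xₙ` actually occur in the q-Dyson product).
`CT` takes the coefficient of the zero exponent vector, i.e. the constant term. -/

open Finset

noncomputable section

abbrev K : Type := RatFunc ℚ

/-- Laurent polynomials (in the variables `x i`, `i : ℕ`) over `ℚ(q)`. -/
abbrev LP : Type := AddMonoidAlgebra K (ℕ →₀ ℤ)

/-- the indeterminate `q`. -/
def q : K := RatFunc.X

/-- the Laurent monomial `(x i) ^ e`. -/
def Xp (i : ℕ) (e : ℤ) : LP := AddMonoidAlgebra.single (Finsupp.single i e) 1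

/-- the constant term (coefficient of `x₀^0 x₁^0 ⋯`). -/
def CT (F : LP) : K := F.coeff 0

/-- scalars embedded in the Laurent polynomial ring. -/
def Cq : K →+* LP := algebraMap K LP

/-- the q-shifted factorial `(z)_k = (1-z)(1-zq)⋯(1-zq^{k-1})` for a Laurent polynomial `z`. -/
def poch (z : LP) (k : ℕ) : LP := ∏ t ∈ range k, (1 - Cq (q ^ t) * z)

/-- `(q)_k = (1-q)(1-q²)⋯(1-q^k)`. -/
def qfac (k : ℕ) : K := ∏ t ∈ range k, (1 - q ^ (t + 1))

/-- the q-Dyson product `Dₙ(x, a, q) = ∏_{0 ≤ i < j ≤ n} (x_i/x_j)_{a_i} (q x_j/x_i)_{a_j}`. -/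
def Dn (n : ℕ) (a : ℕ → ℕ) : LP :=
  ∏ ij ∈ ((range (n+1)) ×ˢ (range (n+1))).filter (fun ij => ij.1 < ij.2),
    poch (Xp ij.1 1 * Xp ij.2 (-1)) (a ij.1) *
      poch (Cq q * (Xp ij.2 1 * Xp ij.1 (-1))) (a ij.2)

/- Proof idea: `π` maps `x_i / x_j` to `x_{i+1} / x_{j+1}` when `j < n`, and `x_i / x_n` to
`q x_{i+1} / x_0`. So the factor of a pair `(i, j)` with `j < n` becomes the factor of
`(i+1, j+1)` for the rotated exponents, while in the factor of `(i, n)` the two q-shifted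
factorials trade places and it becomes the factor of `(0, i+1)`. These two moves together form a
bijection of the pairs `0 ≤ i < j ≤ n`. -/

lemma q_ne_zero : q ≠ 0 := RatFunc.X_ne_zero

lemma Cq_mul_Cq_inv {c : K} (hc : c ≠ 0) : Cq c * Cq c⁻¹ = 1 := by
  rw [← map_mul, mul_inv_cancel₀ hc, map_one]

lemma Xp_add (i : ℕ) (e f : ℤ) : Xp i (e + f) = Xp i e * Xp i f := by
  simp [Xp, AddMonoidAlgebra.single_mul_single, Finsupp.single_add]

lemma Xp_zero (i : ℕ) : Xp i 0 = 1 := by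
  simp [Xp, AddMonoidAlgebra.one_def]

lemma Xp_mul_Xp_neg_one (i : ℕ) : Xp i 1 * Xp i (-1) = 1 := by
  rw [← Xp_add, add_neg_cancel, Xp_zero]

lemma Xp_neg_one_mul_Xp (i : ℕ) : Xp i (-1) * Xp i 1 = 1 := by
  rw [mul_comm, Xp_mul_Xp_neg_one]

lemma map_poch (π : LP →ₐ[K] LP) (z : LP) (k : ℕ) : π (poch z k) = poch (π z) k := by
  simp only [poch, map_prod, map_sub, map_mul, map_one, Cq, AlgHom.commutes]

def pairFactor (a : ℕ → ℕ) (i j : ℕ) : LP :=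
  poch (Xp i 1 * Xp j (-1)) (a i) * poch (Cq q * (Xp j 1 * Xp i (-1))) (a j)

def rotateExps (n : ℕ) (a : ℕ → ℕ) : ℕ → ℕ := fun k => if k = 0 then a n else a (k - 1)

def pairs (n : ℕ) : Finset (ℕ × ℕ) :=
  ((range (n + 1)) ×ˢ (range (n + 1))).filter (fun ij => ij.1 < ij.2)

/-- The shift `k ↦ k + 1 mod (n + 1)` applied to both entries, reordered to stay increasing. -/
def rotatePair (n : ℕ) (ij : ℕ × ℕ) : ℕ × ℕ :=
  if ij.2 = n then (0, ij.1 + 1) else (ij.1 + 1, ij.2 + 1)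

lemma prod_pairs_rotatePair {M : Type*} [CommMonoid M] (n : ℕ) (f : ℕ × ℕ → M) :
    ∏ ij ∈ pairs n, f (rotatePair n ij) = ∏ ij ∈ pairs n, f ij := by
  refine prod_nbij' (rotatePair n)
    (fun ij => if ij.1 = 0 then (ij.2 - 1, n) else (ij.1 - 1, ij.2 - 1)) ?_ ?_ ?_ ?_ (fun _ _ => rfl)
  all_goals
    rintro ⟨i, j⟩ hij
    simp only [pairs, rotatePair] at hij ⊢
    split_ifs <;> simp_all <;> omega

section Rotation

variable (π : LP →ₐ[K] LP)

lemma map_Xp_neg_one_of_map_Xp {i j : ℕ} (h : π (Xp i 1) = Xp j 1) :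
    π (Xp i (-1)) = Xp j (-1) := by
  refine left_inv_eq_right_inv ?_ (Xp_mul_Xp_neg_one j)
  rw [← h, ← map_mul, Xp_neg_one_mul_Xp, map_one]

lemma map_Xp_neg_one_of_map_Xp_eq_Cq_mul {i j : ℕ} {c : K} (hc : c ≠ 0)
    (h : π (Xp i 1) = Cq c * Xp j 1) : π (Xp i (-1)) = Cq c⁻¹ * Xp j (-1) := by
  refine left_inv_eq_right_inv ?_ (?_ : Cq c * Xp j 1 * (Cq c⁻¹ * Xp j (-1)) = 1)
  · rw [← h, ← map_mul, Xp_neg_one_mul_Xp, map_one]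
  · rw [mul_mul_mul_comm, Cq_mul_Cq_inv hc, Xp_mul_Xp_neg_one, one_mul]

variable {n : ℕ} (a : ℕ → ℕ)

lemma map_pairFactor_of_lt (hπ : ∀ k, k < n → π (Xp k 1) = Xp (k + 1) 1)
    {i j : ℕ} (hi : i < n) (hj : j < n) :
    π (pairFactor a i j) = pairFactor (rotateExps n a) (i + 1) (j + 1) := by
  simp only [pairFactor, rotateExps, map_mul, map_poch, Cq, AlgHom.commutes, hπ i hi, hπ j hj,
    map_Xp_neg_one_of_map_Xp π (hπ i hi), map_Xp_neg_one_of_map_Xp π (hπ j hj)]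
  simp

lemma map_pairFactor_last (hπ : ∀ k, k < n → π (Xp k 1) = Xp (k + 1) 1)
    (hπn : π (Xp n 1) = Cq q⁻¹ * Xp 0 1) {i : ℕ} (hi : i < n) :
    π (pairFactor a i n) = pairFactor (rotateExps n a) 0 (i + 1) := by
  have hπn_inv : π (Xp n (-1)) = Cq q * Xp 0 (-1) := by
    simpa using map_Xp_neg_one_of_map_Xp_eq_Cq_mul π (inv_ne_zero q_ne_zero) hπn
  have hq : Cq q * (Cq q⁻¹ * Xp 0 1 * Xp (i + 1) (-1)) = Xp 0 1 * Xp (i + 1) (-1) := by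
    rw [← mul_assoc, ← mul_assoc, Cq_mul_Cq_inv q_ne_zero, one_mul]
  simp only [pairFactor, rotateExps, map_mul, map_poch, hπ i hi, hπn, hπn_inv,
    map_Xp_neg_one_of_map_Xp π (hπ i hi)]
  rw [show π (Cq q) = Cq q from π.commutes q, hq, mul_left_comm (Xp (i + 1) 1), mul_comm]
  simp

end Rotation

/-- The `ℚ(q)`-algebra endomorphism `π` of the Laurent polynomial ring
determined by `x₀ ↦ x₁, x₁ ↦ x₂, …, x_{n-1} ↦ xₙ, xₙ ↦ x₀/q` satisfies
`π (Dₙ(x,(a₀,a₁,…,aₙ),q)) = Dₙ(x,(aₙ,a₀,a₁,…,a_{n-1}),q)`. -/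
theorem pi_Dn (n : ℕ) (a : ℕ → ℕ)
    (π : LP →ₐ[K] LP)
    (hπ : ∀ k, k < n → π (Xp k 1) = Xp (k+1) 1)
    (hπn : π (Xp n 1) = Cq q⁻¹ * Xp 0 1) :
    π (Dn n a) = Dn n (fun k => if k = 0 then a n else a (k-1)) := by
  change π (∏ ij ∈ pairs n, pairFactor a ij.1 ij.2)
    = ∏ ij ∈ pairs n, pairFactor (rotateExps n a) ij.1 ij.2
  rw [map_prod, ← prod_pairs_rotatePair n fun ij => pairFactor (rotateExps n a) ij.1 ij.2]
  refine prod_congr rfl fun ⟨i, j⟩ hij => ?_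
  simp only [pairs, mem_filter, mem_product, mem_range] at hij
  by_cases hj : j = n
  · subst hj
    simp only [rotatePair]
    exact map_pairFactor_last π a hπ hπn hij.2
  · simp only [rotatePair, if_neg hj]
    exact map_pairFactor_of_lt π a hπ (by omega) (by omega)

end
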